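/- arXiv:1102.1365 — 7 statements merged into one kernel-verified Lean document; each statement's English description precedes it below -/
import Mathlib

section
/- Given a vector f = (f₁, ..., f_k) of nonnegative integers, there exists a vector w = (w₁, ..., w_k) of nonnegative integers such that: for every vector λ ∈ ℕ₀ᵏ, if Σⱼ λⱼ wⱼ = Σⱼ fⱼ wⱼ then λ = f; moreover each wᵢ < 2(Σⱼ fⱼ + 1)^(k+1). -/
/-- Base-`b` digit uniqueness. -/
lemma digits_unique_aux (b : ℕ) : ∀ (k : ℕ) (l f : Fin k → ℕ),
    (∀ j, l j < b) → (∀ j, f j < b) →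
    (∑ j, l j * b ^ (j : ℕ)) = (∑ j, f j * b ^ (j : ℕ)) → l = f := by
  intro k
  induction k with
  | zero => intro l f _ _ _; funext j; exact j.elim0
  | succ k ih =>
    intro l f hl hf hsum
    have hb : 0 < b := lt_of_le_of_lt (Nat.zero_le _) (hl 0)
    have e : ∀ g : Fin (k+1) → ℕ,
        (∑ j, g j * b ^ (j : ℕ)) = g 0 + (∑ j : Fin k, g j.succ * b ^ (j : ℕ)) * b := by
      intro g
      rw [Fin.sum_univ_succ, Finset.sum_mul]
      simp [Fin.val_succ, pow_succ, mul_assoc]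
    rw [e l, e f] at hsum
    have h0 : l 0 = f 0 := by
      have := congrArg (· % b) hsum
      simpa [Nat.add_mul_mod_self_right, Nat.mod_eq_of_lt (hl 0),
        Nat.mod_eq_of_lt (hf 0)] using this
    have h1 : (∑ j : Fin k, l j.succ * b ^ (j : ℕ)) = ∑ j : Fin k, f j.succ * b ^ (j : ℕ) := by
      rw [h0] at hsum
      exact Nat.eq_of_mul_eq_mul_right hb (Nat.add_left_cancel hsum)
    have htail := ih (fun j => l j.succ) (fun j => f j.succ)
      (fun j => hl _) (fun j => hf _) h1
    funext j
    refine Fin.cases h0 (fun i => ?_) j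
    exact congrFun htail i

/-- weights making the weighted sum of a nonnegative integer vector
uniquely realized, with bound `wᵢ < 2(Σ fⱼ + 1)^(k+1)`. -/
theorem exists_discriminating_weights (k : ℕ) (f : Fin k → ℕ) :
    ∃ w : Fin k → ℕ,
      (∀ l : Fin k → ℕ, ∑ j, l j * w j = ∑ j, f j * w j → l = f) ∧
      (∀ i, w i < 2 * (∑ j, f j + 1) ^ (k + 1)) := by
  set M := ∑ j, f j with hM
  rcases Nat.eq_zero_or_pos M with hM0 | hMpos
  · -- all f j = 0; take w = 1
    have hsum0 : (∑ j, f j) = 0 := by rw [← hM]; exact hM0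
    have hf0 : ∀ j, f j = 0 := fun j =>
      Finset.sum_eq_zero_iff.mp hsum0 j (Finset.mem_univ j)
    refine ⟨fun _ => 1, ?_, ?_⟩
    · intro l hl
      simp only [mul_one] at hl
      rw [hsum0] at hl
      funext j
      rw [hf0 j]
      exact (Finset.sum_eq_zero_iff.mp hl) j (Finset.mem_univ j)
    · intro i
      have h1 : (1:ℕ) ≤ (M + 1) ^ (k + 1) := Nat.one_le_pow _ _ (Nat.succ_pos _)
      show (1:ℕ) < 2 * (M + 1) ^ (k + 1)
      omega
  · set B := M + 1 with hB
    have hBpos : 0 < B := Nat.succ_pos _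
    have hB2 : 2 ≤ B := by omega
    set n := B ^ (k + 1) with hn
    have npos : 0 < n := pow_pos hBpos _
    refine ⟨fun j => n + B ^ (j : ℕ), ?_, ?_⟩
    · intro l hsum
      have expand : ∀ g : Fin k → ℕ,
          (∑ j, g j * (n + B ^ (j : ℕ))) = (∑ j, g j) * n + ∑ j, g j * B ^ (j : ℕ) := by
        intro g
        simp [Nat.mul_add, Finset.sum_add_distrib, Finset.sum_mul]
      rw [expand l, expand f] at hsum
      have Sbound : ∀ g : Fin k → ℕ, (∑ j, g j) ≤ M → (∑ j, g j * B ^ (j : ℕ)) < n := by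
        intro g hg
        calc (∑ j, g j * B ^ (j : ℕ)) ≤ ∑ j, g j * B ^ k :=
              Finset.sum_le_sum fun j _ =>
                Nat.mul_le_mul_left _ (Nat.pow_le_pow_right hBpos j.isLt.le)
          _ = (∑ j, g j) * B ^ k := (Finset.sum_mul _ _ _).symm
          _ ≤ M * B ^ k := Nat.mul_le_mul_right _ hg
          _ < B * B ^ k := (Nat.mul_lt_mul_right (pow_pos hBpos k)).mpr (Nat.lt_succ_self M)
          _ = B ^ (k + 1) := by rw [pow_succ]; ring
      have hSf : (∑ j, f j * B ^ (j : ℕ)) < n := Sbound f le_rfl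
      have hle : (∑ j, l j) ≤ M := by
        by_contra hgt
        push_neg at hgt
        have hcon : (M + 1) * n < (M + 1) * n := by
          calc (M + 1) * n ≤ (∑ j, l j) * n := Nat.mul_le_mul_right _ hgt
            _ ≤ (∑ j, l j) * n + ∑ j, l j * B ^ (j : ℕ) := Nat.le_add_right _ _
            _ = M * n + ∑ j, f j * B ^ (j : ℕ) := hsum
            _ < M * n + n := Nat.add_lt_add_left hSf _
            _ = (M + 1) * n := by ring
        exact absurd hcon (lt_irrefl _)
      have hSl : (∑ j, l j * B ^ (j : ℕ)) < n := Sbound l hle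
      have hsum' : (∑ j, l j * B ^ (j : ℕ)) + (∑ j, l j) * n
          = (∑ j, f j * B ^ (j : ℕ)) + M * n := by
        have heq : (∑ j, f j) * n = M * n := by rw [← hM]
        omega
      have hS : (∑ j, l j * B ^ (j : ℕ)) = ∑ j, f j * B ^ (j : ℕ) := by
        have := congrArg (· % n) hsum'
        simpa [Nat.add_mul_mod_self_right, Nat.mod_eq_of_lt hSl, Nat.mod_eq_of_lt hSf] using this
      have hsums : (∑ j, l j) = M := by
        rw [hS] at hsum
        exact Nat.eq_of_mul_eq_mul_right npos (Nat.add_right_cancel hsum)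
      have hlB : ∀ j, l j < B := fun j =>
        lt_of_le_of_lt (hsums ▸ Finset.single_le_sum (fun i _ => Nat.zero_le (l i))
          (Finset.mem_univ j)) (Nat.lt_succ_self M)
      have hfB : ∀ j, f j < B := fun j =>
        lt_of_le_of_lt (Finset.single_le_sum (fun i _ => Nat.zero_le (f i))
          (Finset.mem_univ j)) (Nat.lt_succ_self M)
      exact digits_unique_aux B k l f hlB hfB hS
    · intro i
      have h1 : B ^ (i : ℕ) ≤ B ^ k := Nat.pow_le_pow_right hBpos i.isLt.le
      have h2 : B ^ k < B ^ (k + 1) := Nat.pow_lt_pow_right hB2 (Nat.lt_succ_self k)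
      have : n + B ^ (i : ℕ) < 2 * n := by omega
      simpa [hn, hB] using this
end

section
/- A finite multi-digraph G with at least one edge admits a flow that is strictly positive on every edge if and only if G is reflexive (i.e., its weakly connected components coincide with its strongly connected components). Moreover, if G has M vertices and E edges, such a flow can be chosen with value at most E^M on every edge. -/
/-- Directed one-step relation of a multi-digraph given by source and target maps. -/
def DStep {M E : ℕ} (src tgt : Fin E → Fin M) (a b : Fin M) : Prop :=
  ∃ e, src e = a ∧ tgt e = b

/-- Undirected (weak) one-step relation. -/
def WStep {M E : ℕ} (src tgt : Fin E → Fin M) (a b : Fin M) : Prop :=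
  ∃ e, (src e = a ∧ tgt e = b) ∨ (src e = b ∧ tgt e = a)

/-- `G` is reflexive: weakly connected components coincide with strongly connected ones. -/
def Reflexive' {M E : ℕ} (src tgt : Fin E → Fin M) : Prop :=
  ∀ a b, Relation.ReflTransGen (WStep src tgt) a b → Relation.ReflTransGen (DStep src tgt) a b

/-- Conservation of an edge-valued function at every vertex. -/
def Conserved {M E : ℕ} (src tgt : Fin E → Fin M) (f : Fin E → ℕ) : Prop :=
  ∀ v : Fin M, ∑ e ∈ Finset.univ.filter (fun e => tgt e = v), f e
    = ∑ e ∈ Finset.univ.filter (fun e => src e = v), f e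

/-! If `f` is a positive flow and `S` is the set of vertices reachable from the head of an edge `e`,
then no edge leaves `S`; so the flow into `S`, which includes `f e`, equals the flow out of `S`
only if the tail of `e` lies in `S` as well. Conversely, in a reflexive graph a shortest walk from
the head of `e` back to its tail closes `e` into a simple directed cycle; adding up the counting
flows of these `E` cycles gives a positive flow with values at most `E ≤ E ^ M`. -/

theorem sum_count_filter_eq_count_map {α β : Type*} [Fintype α] [DecidableEq α] [DecidableEq β]
    (L : List α) (g : α → β) (b : β) :
    ∑ a with g a = b, L.count a = (L.map g).count b := by
  induction L with
  | nil => simp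
  | cons x L ih => simp [List.count_cons, Finset.sum_add_distrib, ih]

variable {M E : ℕ} {src tgt : Fin E → Fin M}

namespace Conserved

theorem sum_tgt_mem_eq_sum_src_mem {f : Fin E → ℕ} (hf : Conserved src tgt f)
    (S : Finset (Fin M)) :
    ∑ e with tgt e ∈ S, f e = ∑ e with src e ∈ S, f e := by
  rw [← Finset.sum_fiberwise_eq_sum_filter _ S tgt,
    ← Finset.sum_fiberwise_eq_sum_filter _ S src]
  exact Finset.sum_congr rfl fun v _ => hf v

/-- Every edge leaving a vertex of `S` also enters `S`, so the flow into `S`, which equals the flow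
out of `S`, has nothing left for the edges entering from outside. -/
theorem eq_zero_of_tgt_mem_of_src_notMem {f : Fin E → ℕ} (hf : Conserved src tgt f)
    {S : Finset (Fin M)} (hS : ∀ e, src e ∈ S → tgt e ∈ S) {e : Fin E}
    (he_tgt : tgt e ∈ S) (he_src : src e ∉ S) : f e = 0 := by
  have hsub : Finset.univ.filter (src · ∈ S) ⊆ Finset.univ.filter (tgt · ∈ S) := by
    intro e
    simpa using hS e
  have hzero :
      ∑ e ∈ Finset.univ.filter (tgt · ∈ S) \ Finset.univ.filter (src · ∈ S), f e = 0 := by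
    have := Finset.sum_sdiff (f := f) hsub
    rw [hf.sum_tgt_mem_eq_sum_src_mem S] at this
    omega
  exact (Finset.sum_eq_zero_iff.1 hzero) e (by simp [he_tgt, he_src])

theorem reflTransGen_tgt_src {f : Fin E → ℕ} (hf : Conserved src tgt f) (hpos : ∀ e, 0 < f e)
    (e : Fin E) : Relation.ReflTransGen (DStep src tgt) (tgt e) (src e) := by
  classical
  by_contra hne
  let S : Finset (Fin M) := {v | Relation.ReflTransGen (DStep src tgt) (tgt e) v}
  have hS : ∀ e', src e' ∈ S → tgt e' ∈ S := by
    intro e' he'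
    simp only [S, Finset.mem_filter, Finset.mem_univ, true_and] at he' ⊢
    exact he'.tail ⟨e', rfl, rfl⟩
  refine (hpos e).ne' (hf.eq_zero_of_tgt_mem_of_src_notMem hS (e := e) ?_ ?_)
  · simp [S, Relation.ReflTransGen.refl]
  · simpa [S] using hne

theorem reflexive' {f : Fin E → ℕ} (hf : Conserved src tgt f) (hpos : ∀ e, 0 < f e) :
    Reflexive' src tgt := by
  intro a b hab
  refine Relation.ReflTransGen.lift' id (fun a b hab => ?_) a b hab
  obtain ⟨e, ⟨rfl, rfl⟩ | ⟨rfl, rfl⟩⟩ := hab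
  · exact .single ⟨e, rfl, rfl⟩
  · exact hf.reflTransGen_tgt_src hpos e

theorem sum {ι : Type*} {s : Finset ι} {f : ι → Fin E → ℕ}
    (hf : ∀ i ∈ s, Conserved src tgt (f i)) :
    Conserved src tgt fun e => ∑ i ∈ s, f i e := by
  intro v
  rw [Finset.sum_comm, Finset.sum_comm (s := Finset.univ.filter _)]
  exact Finset.sum_congr rfl fun i hi => hf i hi v

end Conserved

variable (src tgt) in
def IsWalk : Fin M → Fin M → List (Fin E) → Prop
  | a, b, [] => a = b
  | a, b, e :: L => src e = a ∧ IsWalk (tgt e) b L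

@[simp] theorem isWalk_nil {a b : Fin M} : IsWalk src tgt a b [] ↔ a = b := Iff.rfl

@[simp] theorem isWalk_cons {a b : Fin M} {e : Fin E} {L : List (Fin E)} :
    IsWalk src tgt a b (e :: L) ↔ src e = a ∧ IsWalk src tgt (tgt e) b L := Iff.rfl

theorem isWalk_append {a c : Fin M} {L₁ L₂ : List (Fin E)} :
    IsWalk src tgt a c (L₁ ++ L₂) ↔
      ∃ b, IsWalk src tgt a b L₁ ∧ IsWalk src tgt b c L₂ := by
  induction L₁ generalizing a with
  | nil => simp
  | cons e L ih => simp [ih, and_assoc]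

theorem exists_isWalk_of_reflTransGen {a b : Fin M}
    (h : Relation.ReflTransGen (DStep src tgt) a b) : ∃ L, IsWalk src tgt a b L := by
  induction h using Relation.ReflTransGen.head_induction_on with
  | refl => exact ⟨[], rfl⟩
  | head hstep _ ih =>
    obtain ⟨e, rfl, rfl⟩ := hstep
    obtain ⟨L, hL⟩ := ih
    exact ⟨e :: L, rfl, hL⟩

namespace IsWalk

theorem shortcut {a b : Fin M} {P Q R : List (Fin E)} {x : Fin E}
    (h : IsWalk src tgt a b (P ++ x :: Q ++ x :: R)) : IsWalk src tgt a b (P ++ x :: R) := by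
  obtain ⟨c, hPQ, rfl, hR⟩ := by simpa only [isWalk_append, isWalk_cons] using h
  obtain ⟨d, hP, rfl, -⟩ := by simpa only [isWalk_append, isWalk_cons] using hPQ
  exact isWalk_append.2 ⟨_, hP, rfl, hR⟩

/-- A shortest walk repeats no edge, since a repetition could be cut out by `shortcut`. -/
theorem exists_nodup {a b : Fin M} {L : List (Fin E)} (h : IsWalk src tgt a b L) :
    ∃ L', IsWalk src tgt a b L' ∧ L'.Nodup := by
  classical
  have hex : ∃ n, ∃ L, IsWalk src tgt a b L ∧ L.length = n := ⟨_, L, h, rfl⟩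
  obtain ⟨L, hL, hlen⟩ := Nat.find_spec hex
  refine ⟨L, hL, List.nodup_iff_sublist.2 fun x hx => ?_⟩
  obtain ⟨r₁, r₂, rfl, hx₁, hx₂⟩ := List.cons_sublist_iff.1 hx
  obtain ⟨P, Q, rfl⟩ := List.append_of_mem hx₁
  obtain ⟨Q', R, rfl⟩ := List.append_of_mem (List.singleton_sublist.1 hx₂)
  have hL' : IsWalk src tgt a b (P ++ x :: (Q ++ Q') ++ x :: R) := by simpa using hL
  have hshort := Nat.find_min' hex (m := (P ++ x :: R).length) ⟨_, hL'.shortcut, rfl⟩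
  simp only [List.length_append, List.length_cons] at hshort hlen
  omega

theorem cons_map_tgt_eq_map_src_append {a b : Fin M} {L : List (Fin E)}
    (h : IsWalk src tgt a b L) : a :: L.map tgt = L.map src ++ [b] := by
  induction L generalizing a with
  | nil => simpa using h
  | cons e L ih => simp [← h.1, ih h.2]

theorem map_tgt_perm_map_src {a : Fin M} {L : List (Fin E)} (h : IsWalk src tgt a a L) :
    (L.map tgt).Perm (L.map src) := by
  have := List.perm_append_singleton a (L.map src)
  rw [← h.cons_map_tgt_eq_map_src_append] at this
  exact this.cons_inv

end IsWalk

theorem IsWalk.conserved_count {a : Fin M} {L : List (Fin E)} (h : IsWalk src tgt a a L) :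
    Conserved src tgt (L.count ·) := by
  intro v
  rw [sum_count_filter_eq_count_map, sum_count_filter_eq_count_map]
  exact h.map_tgt_perm_map_src.count_eq v

namespace Reflexive'

theorem exists_isWalk_nodup_mem (h : Reflexive' src tgt) (e : Fin E) :
    ∃ C, IsWalk src tgt (src e) (src e) C ∧ C.Nodup ∧ e ∈ C := by
  obtain ⟨L, hL⟩ := exists_isWalk_of_reflTransGen (h _ _ (.single ⟨e, .inr ⟨rfl, rfl⟩⟩))
  obtain ⟨L, hL, hnd⟩ := hL.exists_nodup
  by_cases he : e ∈ L
  · obtain ⟨P, Q, rfl⟩ := List.append_of_mem he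
    obtain ⟨_, hP, rfl, -⟩ := by simpa only [isWalk_append, isWalk_cons] using hL
    refine ⟨e :: P, ⟨rfl, hP⟩, ?_, List.mem_cons_self⟩
    exact (List.nodup_middle.1 hnd).sublist (by simp)
  · exact ⟨e :: L, ⟨rfl, hL⟩, List.nodup_cons.2 ⟨he, hnd⟩, List.mem_cons_self⟩

/-- Superpose one simple cycle through each edge. -/
theorem exists_conserved_pos_le (h : Reflexive' src tgt) :
    ∃ f : Fin E → ℕ, (∀ e, 0 < f e ∧ f e ≤ E) ∧ Conserved src tgt f := by
  choose C hC hnd hmem using h.exists_isWalk_nodup_mem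
  refine ⟨fun e' => ∑ e, (C e).count e', fun e' => ⟨?_, ?_⟩,
    Conserved.sum fun e _ => (hC e).conserved_count⟩
  · exact (List.count_pos_iff.2 (hmem e')).trans_le
      (Finset.single_le_sum (f := fun e => (C e).count e') (by simp) (Finset.mem_univ e'))
  · calc ∑ e, (C e).count e' ≤ ∑ _e : Fin E, 1 :=
          Finset.sum_le_sum fun e _ => List.nodup_iff_count_le_one.1 (hnd e) e'
      _ = E := by simp

end Reflexive'

theorem exists_positive_flow_iff_reflexive_general (M E : ℕ)
    (src tgt : Fin E → Fin M) :
    ((∃ f : Fin E → ℕ, (∀ e, 0 < f e) ∧ Conserved src tgt f) ↔ Reflexive' src tgt) ∧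
    (Reflexive' src tgt →
      ∃ f : Fin E → ℕ, (∀ e, 0 < f e ∧ f e ≤ E ^ M) ∧ Conserved src tgt f) := by
  refine ⟨⟨fun ⟨f, hpos, hf⟩ => hf.reflexive' hpos, fun h => ?_⟩, fun h => ?_⟩
  · obtain ⟨f, hf, hc⟩ := h.exists_conserved_pos_le
    exact ⟨f, fun e => (hf e).1, hc⟩
  · obtain ⟨f, hf, hc⟩ := h.exists_conserved_pos_le
    exact ⟨f, fun e => ⟨(hf e).1, (hf e).2.trans (Nat.le_self_pow (src e).pos.ne' E)⟩, hc⟩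

/-- a finite multi-digraph with at least one edge admits a flow strictly
positive on every edge iff it is reflexive; moreover such a flow can be chosen with all
values at most `E ^ M`. -/
theorem exists_positive_flow_iff_reflexive (M E : ℕ) (hE : 0 < E)
    (src tgt : Fin E → Fin M) :
    ((∃ f : Fin E → ℕ, (∀ e, 0 < f e) ∧ Conserved src tgt f) ↔ Reflexive' src tgt) ∧
    (Reflexive' src tgt →
      ∃ f : Fin E → ℕ, (∀ e, 0 < f e ∧ f e ≤ E ^ M) ∧ Conserved src tgt f) :=
  exists_positive_flow_iff_reflexive_general M E src tgt
end

section
/- Let G be a connected abstract multi-digraph with at least one edge. Then there exists an edge e of G such that G ∖ {e} is still strongly connected. -/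
/-- Directed one-step relation of a multi-digraph, restricted to a set `A` of usable edges. -/
def DStepOn {M E : ℕ} (src tgt : Fin E → Fin M) (A : Set (Fin E)) (a b : Fin M) : Prop :=
  ∃ e ∈ A, src e = a ∧ tgt e = b

/-- A multi-digraph is abstract if it has no subdivision vertex, i.e. no vertex with
exactly one incoming and exactly one outgoing edge, these edges being distinct. -/
def IsAbstract {M E : ℕ} (src tgt : Fin E → Fin M) : Prop :=
  ∀ v : Fin M,
    ¬ ((Finset.univ.filter (fun e => tgt e = v)).card = 1 ∧
       (Finset.univ.filter (fun e => src e = v)).card = 1 ∧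
       Finset.univ.filter (fun e => tgt e = v) ≠ Finset.univ.filter (fun e => src e = v))

/-!
Suppose every edge is essential: its ends are not joined by a walk avoiding it. Take a maximal
proper vertex set `S` inducing a strongly connected subgraph, and an edge `f` from `S` to a vertex
`w ∉ S`. Leave `w` along the first edge `h` of a walk back to `S` that never revisits `w`. For any
other edge `g` at `w`, the vertices lying on closed walks through `S` that avoid `g` induce a
strongly connected subgraph containing `w`; by maximality it is the whole graph, so `g` is not
essential. Hence `f` and `h` are the only edges at `w`, and `w` is a subdivision vertex.
-/

open Relation Set

theorem Relation.ReflTransGen.exists_step_of_mem_of_notMem {α : Type*} {r : α → α → Prop}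
    {S : Set α} {a b : α} (h : ReflTransGen r a b) (ha : a ∈ S) (hb : b ∉ S) :
    ∃ x ∈ S, ∃ y ∉ S, r x y := by
  induction h with
  | refl => exact absurd ha hb
  | @tail c d _ hcd ih =>
    by_cases hc : c ∈ S
    · exact ⟨c, hc, d, hb, hcd⟩
    · exact ih hc

/-- Cutting a walk from `a` at its last visit to `a`. -/
theorem Relation.ReflTransGen.exists_head_avoiding {α : Type*} {r : α → α → Prop} {a b : α}
    (h : ReflTransGen r a b) (hab : a ≠ b) :
    ∃ c, r a c ∧ c ≠ a ∧ ReflTransGen (fun x y => r x y ∧ x ≠ a ∧ y ≠ a) c b := by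
  induction h with
  | refl => exact absurd rfl hab
  | @tail c d _ hcd ih =>
    by_cases hca : c = a
    · subst hca
      exact ⟨d, hcd, hab.symm, .refl⟩
    · obtain ⟨x, hax, hxa, hxc⟩ := ih (Ne.symm hca)
      exact ⟨x, hax, hxa, hxc.tail ⟨hcd, hca, hab.symm⟩⟩

section DStepOn

variable {M E : ℕ} {src tgt : Fin E → Fin M}

theorem reflTransGen_dStepOn_mono {A B : Set (Fin E)} (hAB : A ⊆ B) {a b : Fin M}
    (h : ReflTransGen (DStepOn src tgt A) a b) : ReflTransGen (DStepOn src tgt B) a b :=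
  ReflTransGen.mono (fun _ _ ⟨e, he, hs, ht⟩ => ⟨e, hAB he, hs, ht⟩) _ _ h

theorem reflTransGen_dStepOn_ne_of_bypass {g : Fin E}
    (hg : ReflTransGen (DStepOn src tgt {e | e ≠ g}) (src g) (tgt g)) {a b : Fin M}
    (hab : ReflTransGen (DStepOn src tgt univ) a b) :
    ReflTransGen (DStepOn src tgt {e | e ≠ g}) a b := by
  induction hab with
  | refl => exact .refl
  | tail _ hcd ih =>
    obtain ⟨f, -, rfl, rfl⟩ := hcd
    by_cases hfg : f = g
    · exact ih.trans (hfg ▸ hg)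
    · exact ih.tail ⟨f, hfg, rfl, rfl⟩

theorem reflTransGen_dStepOn_induced {A : Set (Fin E)} {Y : Set (Fin M)} {a b : Fin M}
    (h : ReflTransGen (DStepOn src tgt A) a b)
    (hY : ∀ x, ReflTransGen (DStepOn src tgt A) a x → ReflTransGen (DStepOn src tgt A) x b →
      x ∈ Y) :
    ReflTransGen (DStepOn src tgt {e | src e ∈ Y ∧ tgt e ∈ Y}) a b := by
  induction h with
  | refl => exact .refl
  | @tail c d hac hcd ih =>
    have hY' : ∀ x, ReflTransGen (DStepOn src tgt A) a x →
        ReflTransGen (DStepOn src tgt A) x c → x ∈ Y :=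
      fun x hax hxc => hY x hax (hxc.tail hcd)
    have hdY : d ∈ Y := hY d (hac.tail hcd) .refl
    obtain ⟨e, -, rfl, rfl⟩ := hcd
    exact (ih hY').tail ⟨e, ⟨hY' _ hac .refl, hdY⟩, rfl, rfl⟩

theorem exists_out_edge_reach_avoiding {w b : Fin M}
    (hwb : ReflTransGen (DStepOn src tgt univ) w b) (hne : w ≠ b) :
    ∃ h, src h = w ∧ tgt h ≠ w ∧
      ReflTransGen (DStepOn src tgt {e | src e ≠ w ∧ tgt e ≠ w}) (tgt h) b := by
  obtain ⟨c, ⟨h, -, hs, rfl⟩, hcw, hcb⟩ := hwb.exists_head_avoiding hne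
  exact ⟨h, hs, hcw, ReflTransGen.mono
    (fun _ _ ⟨⟨e, _, hs, ht⟩, hx, hy⟩ => ⟨e, ⟨hs ▸ hx, ht ▸ hy⟩, hs, ht⟩) _ _ hcb⟩

variable (src tgt) in
/-- The subgraph induced on `S` is strongly connected. -/
def IsStrongOn (S : Set (Fin M)) : Prop :=
  ∀ a ∈ S, ∀ b ∈ S, ReflTransGen (DStepOn src tgt {e | src e ∈ S ∧ tgt e ∈ S}) a b

variable (src tgt) in
def IsProperStrongSet (S : Set (Fin M)) : Prop :=
  S.Nonempty ∧ S ≠ univ ∧ IsStrongOn src tgt S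

variable (src tgt) in
def mutualReach (A : Set (Fin E)) (S : Set (Fin M)) : Set (Fin M) :=
  {v | (∃ s ∈ S, ReflTransGen (DStepOn src tgt A) v s) ∧
    ∃ s ∈ S, ReflTransGen (DStepOn src tgt A) s v}

theorem subset_mutualReach (A : Set (Fin E)) (S : Set (Fin M)) : S ⊆ mutualReach src tgt A S :=
  fun s hs => ⟨⟨s, hs, .refl⟩, ⟨s, hs, .refl⟩⟩

theorem isStrongOn_mutualReach {S : Set (Fin M)} (hS : IsStrongOn src tgt S)
    (A : Set (Fin E)) : IsStrongOn src tgt (mutualReach src tgt A S) := by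
  set Y := mutualReach src tgt A S
  rintro a ⟨⟨s₁, hs₁, has₁⟩, ⟨t, ht, hta⟩⟩ b ⟨⟨u, hu, hbu⟩, ⟨s₂, hs₂, hs₂b⟩⟩
  have hleft := reflTransGen_dStepOn_induced (Y := Y) has₁
    fun x hax hxs => ⟨⟨s₁, hs₁, hxs⟩, ⟨t, ht, hta.trans hax⟩⟩
  have hright := reflTransGen_dStepOn_induced (Y := Y) hs₂b
    fun x hsx hxb => ⟨⟨u, hu, hxb.trans hbu⟩, ⟨s₂, hs₂, hsx⟩⟩
  have hSY := subset_mutualReach (src := src) (tgt := tgt) A S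
  have hmid := reflTransGen_dStepOn_mono (A := {e | src e ∈ S ∧ tgt e ∈ S})
    (B := {e | src e ∈ Y ∧ tgt e ∈ Y})
    (fun _ ⟨h₁, h₂⟩ => ⟨hSY h₁, hSY h₂⟩) (hS s₁ hs₁ s₂ hs₂)
  exact hleft.trans (hmid.trans hright)

theorem exists_maximal_isProperStrongSet {e : Fin E} (he : src e ≠ tgt e) :
    ∃ S, Maximal (IsProperStrongSet src tgt) S := by
  have hsingle : IsProperStrongSet src tgt {src e} :=
    ⟨singleton_nonempty _, fun h => he (mem_singleton_iff.mp (h ▸ mem_univ (tgt e))).symm,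
      fun a ha b hb => by rw [mem_singleton_iff.mp ha, mem_singleton_iff.mp hb]⟩
  obtain ⟨S, -, hS⟩ := Finite.exists_le_maximal hsingle
  exact ⟨S, hS⟩

/-- The vertices on closed walks through `S` avoiding `g` induce a strongly connected subgraph
containing `w`, so by maximality they are all the vertices. -/
theorem reflTransGen_of_maximal_isProperStrongSet {S : Set (Fin M)}
    (hS : Maximal (IsProperStrongSet src tgt) S) {w : Fin M} (hw : w ∉ S) {g : Fin E}
    (hg : src g = w ∨ tgt g = w)
    (hin : ∃ s ∈ S, ReflTransGen (DStepOn src tgt {e | e ≠ g}) s w)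
    (hout : ∃ s ∈ S, ReflTransGen (DStepOn src tgt {e | e ≠ g}) w s) :
    ReflTransGen (DStepOn src tgt {e | e ≠ g}) (src g) (tgt g) := by
  obtain ⟨hSne, -, hSstrong⟩ := hS.prop
  have hSY := subset_mutualReach (src := src) (tgt := tgt) {e | e ≠ g} S
  have hY : mutualReach src tgt {e | e ≠ g} S = univ := by
    by_contra hY
    have hYS := hS.eq_of_subset ⟨hSne.mono hSY, hY, isStrongOn_mutualReach hSstrong _⟩ hSY
    exact hw (hYS ▸ show w ∈ mutualReach src tgt {e | e ≠ g} S from ⟨hout, hin⟩)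
  obtain ⟨⟨s₁, hs₁, h₁⟩, -⟩ : src g ∈ mutualReach src tgt {e | e ≠ g} S := hY ▸ mem_univ _
  obtain ⟨-, ⟨s₂, hs₂, h₂⟩⟩ : tgt g ∈ mutualReach src tgt {e | e ≠ g} S := hY ▸ mem_univ _
  have hmid : ReflTransGen (DStepOn src tgt {e | e ≠ g}) s₁ s₂ :=
    reflTransGen_dStepOn_mono (fun e ⟨he₁, he₂⟩ heg => by
      subst heg; rcases hg with rfl | rfl <;> contradiction) (hSstrong s₁ hs₁ s₂ hs₂)
  exact h₁.trans (hmid.trans h₂)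

theorem not_isAbstract_of_edges_at {w : Fin M} {f h : Fin E} (hf : tgt f = w) (hfw : src f ≠ w)
    (hh : src h = w) (hhw : tgt h ≠ w) (hat : ∀ g, src g = w ∨ tgt g = w → g = f ∨ g = h) :
    ¬ IsAbstract src tgt := by
  have hin : Finset.univ.filter (fun e => tgt e = w) = {f} := by
    ext e
    simp only [Finset.mem_filter, Finset.mem_univ, true_and, Finset.mem_singleton]
    refine ⟨fun he => (hat e (.inr he)).resolve_right ?_, fun he => he ▸ hf⟩
    rintro rfl; exact hhw he
  have hout : Finset.univ.filter (fun e => src e = w) = {h} := by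
    ext e
    simp only [Finset.mem_filter, Finset.mem_univ, true_and, Finset.mem_singleton]
    refine ⟨fun he => (hat e (.inl he)).resolve_left ?_, fun he => he ▸ hh⟩
    rintro rfl; exact hfw he
  refine fun habs => habs w ⟨by rw [hin]; rfl, by rw [hout]; rfl, ?_⟩
  rw [hin, hout]
  rintro hfh
  exact hfw (Finset.singleton_injective hfh ▸ hh)

theorem not_isAbstract_of_forall_essential (e₀ : Fin E)
    (hconn : ∀ a b, ReflTransGen (DStepOn src tgt univ) a b)
    (hess : ∀ g, ¬ ReflTransGen (DStepOn src tgt {e | e ≠ g}) (src g) (tgt g)) :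
    ¬ IsAbstract src tgt := by
  obtain ⟨S, hS⟩ :=
    exists_maximal_isProperStrongSet (e := e₀) fun h : src e₀ = tgt e₀ => hess e₀ (by rw [h])
  obtain ⟨⟨s, hs⟩, hSuniv, -⟩ := hS.prop
  obtain ⟨v, hv⟩ := (ne_univ_iff_exists_notMem S).mp hSuniv
  obtain ⟨-, hfS, -, hfw, f, -, rfl, rfl⟩ := (hconn s v).exists_step_of_mem_of_notMem hs hv
  obtain ⟨h, hhf, hhloop, hhS⟩ :=
    exists_out_edge_reach_avoiding (hconn (tgt f) s) fun hfs => hfw (hfs ▸ hs)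
  refine not_isAbstract_of_edges_at rfl (fun hff : src f = tgt f => hfw (hff ▸ hfS)) hhf hhloop
    fun g hg => ?_
  by_contra! hg'
  refine hess g (reflTransGen_of_maximal_isProperStrongSet hS hfw hg
    ⟨src f, hfS, .single ⟨f, hg'.1.symm, rfl, rfl⟩⟩
    ⟨s, hs, .head ⟨h, hg'.2.symm, hhf, rfl⟩ (reflTransGen_dStepOn_mono ?_ hhS)⟩)
  rintro e ⟨hes, het⟩ rfl
  exact hg.elim hes het

end DStepOn

/-- a connected abstract multi-digraph with at least one edge has an edge
whose removal leaves it strongly connected. -/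
theorem exists_removable_edge (M E : ℕ) (hE : 0 < E) (src tgt : Fin E → Fin M)
    (hconn : ∀ a b : Fin M, Relation.ReflTransGen (DStepOn src tgt Set.univ) a b)
    (habs : IsAbstract src tgt) :
    ∃ e₀ : Fin E, ∀ a b : Fin M,
      Relation.ReflTransGen (DStepOn src tgt {e | e ≠ e₀}) a b := by
  by_contra! hno
  refine not_isAbstract_of_forall_essential ⟨0, hE⟩ hconn (fun g hg => ?_) habs
  obtain ⟨a, b, hab⟩ := hno g
  exact hab (reflTransGen_dStepOn_ne_of_bypass hg (hconn a b))
end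

section
/- In the construction of the table used to reduce SUBSET-SUM' to MIXED-SUBSET-SUM': suppose λ = (λ_{α₁},...,λ_{α_n}, λ_{β₁},...,λ_{β_n}, λ_P, λ_Q) is a vector of nonnegative integers, not all zero, with total sum strictly less than 2n+2, satisfying the row equations (1) Σᵢ λ_{αᵢ} aᵢ = 0, (2) −Σᵢ λ_{αᵢ} − Σᵢ λ_{βᵢ} + n λ_P + n λ_Q = 0, (3) for each i, −λ_{αᵢ} − λ_{βᵢ} + λ_P + λ_Q = 0, and (4) −Σᵢ λ_{αᵢ} + r λ_P + (n−r) λ_Q = 0, where 0 < r < n. Then λ_P + λ_Q = 1, λ_{αᵢ} + λ_{βᵢ} = 1 for all i, Σᵢ λ_{αᵢ} ∈ {r, n−r}, all entries of λ lie in {0,1}, and (λ_{αᵢ})ᵢ is a solution to SUBSET-SUM' on (a₁,...,a_n), i.e. a 0-1 vector with 0 < Σᵢ λ_{αᵢ} < n and Σᵢ λ_{αᵢ} aᵢ = 0. -/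
/-- any solution of the table's row equations with total weight `< 2n+2`
is a 0-1 vector yielding a solution of SUBSET-SUM' on `(a₁,…,a_n)`. -/
theorem table_solution_gives_subsetSum' (n : ℕ) (a : Fin n → ℤ) (ha : ∑ i, a i = 0)
    (r : ℕ) (hr0 : 0 < r) (hrn : r < n)
    (la lb : Fin n → ℕ) (lP lQ : ℕ)
    (hne : ¬ ((∀ i, la i = 0) ∧ (∀ i, lb i = 0) ∧ lP = 0 ∧ lQ = 0))
    (htot : (∑ i, la i) + (∑ i, lb i) + lP + lQ < 2 * n + 2)
    (h1 : ∑ i, (la i : ℤ) * a i = 0)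
    (h2 : -(∑ i, (la i : ℤ)) - (∑ i, (lb i : ℤ)) + (n : ℤ) * lP + (n : ℤ) * lQ = 0)
    (h3 : ∀ i, -(la i : ℤ) - (lb i : ℤ) + (lP : ℤ) + (lQ : ℤ) = 0)
    (h4 : -(∑ i, (la i : ℤ)) + (r : ℤ) * lP + ((n : ℤ) - (r : ℤ)) * lQ = 0) :
    lP + lQ = 1 ∧ (∀ i, la i + lb i = 1) ∧
    (∑ i, la i = r ∨ ∑ i, la i = n - r) ∧
    (∀ i, la i ≤ 1) ∧ (∀ i, lb i ≤ 1) ∧ lP ≤ 1 ∧ lQ ≤ 1 ∧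
    0 < ∑ i, la i ∧ (∑ i, la i) < n ∧ ∑ i, (la i : ℤ) * a i = 0 := by
  have key : ∀ i, la i + lb i = lP + lQ := by
    intro i
    have := h3 i
    omega
  have hsum : (∑ i, la i) + (∑ i, lb i) = n * (lP + lQ) := by
    calc (∑ i, la i) + (∑ i, lb i) = ∑ i, (la i + lb i) := by
          rw [Finset.sum_add_distrib]
      _ = ∑ _i : Fin n, (lP + lQ) := by simp only [key]
      _ = n * (lP + lQ) := by simp [Finset.sum_const, mul_comm]
  have hs1 : lP + lQ ≤ 1 := by
    by_contra h
    push_neg at h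
    have : 2 * (n + 1) ≤ (n + 1) * (lP + lQ) := by nlinarith
    nlinarith [hsum, htot]
  have hs : lP + lQ = 1 := by
    rcases Nat.lt_or_ge (lP + lQ) 1 with h | h
    · exfalso
      have h0 : lP + lQ = 0 := by omega
      exact hne ⟨fun i => by have := key i; omega, fun i => by have := key i; omega,
        by omega, by omega⟩
    · omega
  have hcast : (↑(∑ i, la i) : ℤ) = ∑ i, (la i : ℤ) := by push_cast; ring
  have hla : ∑ i, la i = r ∨ ∑ i, la i = n - r := by
    rcases Nat.lt_or_ge lP 1 with h | h
    · have hP : lP = 0 := by omega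
      have hQ : lQ = 1 := by omega
      right
      have : (↑(∑ i, la i) : ℤ) = (n : ℤ) - r := by
        rw [hcast]; rw [hP, hQ] at h4; push_cast at h4 ⊢; linarith
      omega
    · have hP : lP = 1 := by omega
      have hQ : lQ = 0 := by omega
      left
      have : (↑(∑ i, la i) : ℤ) = (r : ℤ) := by
        rw [hcast]; rw [hP, hQ] at h4; push_cast at h4 ⊢; linarith
      omega
  refine ⟨hs, fun i => by have := key i; omega, hla,
    fun i => by have := key i; omega, fun i => by have := key i; omega,
    by omega, by omega, ?_, ?_, h1⟩
  · rcases hla with h | h <;> omega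
  · rcases hla with h | h <;> omega
end

section
/- In the same table construction: if μ₁, ..., μ_n ∈ {0,1} satisfy 0 < Σᵢ μᵢ < n and Σᵢ μᵢ aᵢ = 0, then setting r = Σᵢ μᵢ, λ_{αᵢ} = μᵢ, λ_{βᵢ} = 1 − μᵢ, λ_P = 1, λ_Q = 0 yields a 0-1 vector with 0 < Σⱼ λⱼ < 2n+2 satisfying all the row equations (1)–(4) of the table. -/
/-- a solution `μ` of SUBSET-SUM' on `(a₁,…,a_n)` gives, via
`λ_{αᵢ} = μᵢ, λ_{βᵢ} = 1 − μᵢ, λ_P = 1, λ_Q = 0` and `r = Σ μᵢ`, a 0-1 solution of all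
row equations of the table, with total weight strictly between `0` and `2n+2`. -/
theorem subsetSum'_gives_table_solution (n : ℕ) (a : Fin n → ℤ) (ha : ∑ i, a i = 0)
    (mu : Fin n → ℕ) (hmu : ∀ i, mu i ≤ 1)
    (hpos : 0 < ∑ i, mu i) (hlt : (∑ i, mu i) < n)
    (hsum : ∑ i, (mu i : ℤ) * a i = 0) :
    (∀ i, mu i ≤ 1) ∧ (∀ i, 1 - mu i ≤ 1) ∧ (1 : ℕ) ≤ 1 ∧ (0 : ℕ) ≤ 1 ∧
    0 < (∑ i, mu i) + (∑ i, (1 - mu i)) + 1 + 0 ∧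
    (∑ i, mu i) + (∑ i, (1 - mu i)) + 1 + 0 < 2 * n + 2 ∧
    -- row (1)
    (∑ i, (mu i : ℤ) * a i = 0) ∧
    -- row (2)
    (-(∑ i, (mu i : ℤ)) - (∑ i, ((1 - mu i : ℕ) : ℤ)) + (n : ℤ) * 1 + (n : ℤ) * 0 = 0) ∧
    -- rows (3)
    (∀ i, -(mu i : ℤ) - ((1 - mu i : ℕ) : ℤ) + (1 : ℤ) + (0 : ℤ) = 0) ∧
    -- row (4), with r = Σ μᵢ
    (-(∑ i, (mu i : ℤ)) + ((∑ i, mu i : ℕ) : ℤ) * 1 + ((n : ℤ) - ((∑ i, mu i : ℕ) : ℤ)) * 0 = 0) := by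
  have hcast : ∀ i, ((1 - mu i : ℕ) : ℤ) = 1 - (mu i : ℤ) := by
    intro i
    have := hmu i
    omega
  have hsum2 : ∑ i, ((1 - mu i : ℕ) : ℤ) = (n : ℤ) - ∑ i, (mu i : ℤ) := by
    rw [Finset.sum_congr rfl (fun i _ => hcast i), Finset.sum_sub_distrib]
    simp
  refine ⟨hmu, fun i => by omega, le_refl _, by omega, by omega, ?_, hsum, ?_, ?_, ?_⟩
  · have h : (∑ i, (1 - mu i)) ≤ n := by
      calc (∑ i, (1 - mu i)) ≤ ∑ _i : Fin n, 1 := Finset.sum_le_sum (fun i _ => by omega)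
      _ = n := by simp
    omega
  · rw [hsum2]; ring
  · intro i; rw [hcast]; ring
  · push_cast; ring
end

section
/- Let v₁, ..., v_n ∈ ℤᵏ be vectors and let B be a bound with |vᵢ^{(j)}| ≤ B for all i, j. Choose N₁ = 1 and Nⱼ₊₁ > 2nB·(N₁ + ... + Nⱼ) for each j, and set yᵢ = Σⱼ Nⱼ vᵢ^{(j)} ∈ ℤ. Then for every vector λ ∈ {0,1}ⁿ (more generally, λ ∈ ℕⁿ with Σᵢ λᵢ ≤ n), one has Σᵢ λᵢ yᵢ = 0 if and only if Σᵢ λᵢ vᵢ = 0 in ℤᵏ. -/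
private lemma no_carry_aux (N c : ℕ → ℤ) (M : ℤ)
    (hc : ∀ j, |c j| ≤ M)
    (hNpos : ∀ j, 0 < N j)
    (hbound : ∀ m, M * ∑ i ∈ Finset.range m, N i < N m) :
    ∀ m, (∑ j ∈ Finset.range m, N j * c j = 0) → ∀ j < m, c j = 0 := by
  intro m
  induction m with
  | zero => intro _ j hj; omega
  | succ m ih =>
    intro hsum j hj
    rw [Finset.sum_range_succ] at hsum
    have habs : |∑ j ∈ Finset.range m, N j * c j| ≤ M * ∑ i ∈ Finset.range m, N i := by
      calc |∑ j ∈ Finset.range m, N j * c j| ≤ ∑ j ∈ Finset.range m, |N j * c j| :=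
            Finset.abs_sum_le_sum_abs _ _
        _ ≤ ∑ j ∈ Finset.range m, N j * M := by
            apply Finset.sum_le_sum
            intro i _
            rw [abs_mul, abs_of_pos (hNpos i)]
            exact mul_le_mul_of_nonneg_left (hc i) (hNpos i).le
        _ = M * ∑ i ∈ Finset.range m, N i := by rw [Finset.mul_sum]; simp [mul_comm]
    have hcm : c m = 0 := by
      by_contra h
      have h1 : (1 : ℤ) ≤ |c m| := Int.one_le_abs (by omega)
      have h2 : N m ≤ |N m * c m| := by
        rw [abs_mul, abs_of_pos (hNpos m)]
        nlinarith [hNpos m]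
      have heq : N m * c m = -∑ j ∈ Finset.range m, N j * c j := by linarith
      rw [heq, abs_neg] at h2
      have := hbound m
      omega
    rcases Nat.lt_succ_iff_lt_or_eq.mp hj with h | h
    · exact ih (by rw [hcm] at hsum; linarith) j h
    · rw [h]; exact hcm

/-- with weights `N₀ = 1`, `N_{j+1} > 2nB·(N₀+⋯+Nⱼ)`, the combined numbers
`yᵢ = Σⱼ Nⱼ vᵢ⁽ʲ⁾` satisfy: for every `λ ∈ ℕⁿ` with `Σ λᵢ ≤ n`, `Σᵢ λᵢ yᵢ = 0` iff
`Σᵢ λᵢ vᵢ = 0` in `ℤᵏ`. -/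
theorem combined_weights_subset_sum_equiv (n k : ℕ) (v : Fin n → Fin k → ℤ) (B : ℕ)
    (hB : ∀ i j, |v i j| ≤ (B : ℤ))
    (N : ℕ → ℤ) (hN0 : N 0 = 1)
    (hNgrow : ∀ j : ℕ, 2 * n * B * ∑ i ∈ Finset.range (j + 1), N i < N (j + 1))
    (y : Fin n → ℤ) (hy : ∀ i, y i = ∑ j : Fin k, N j * v i j)
    (l : Fin n → ℕ) (hl : (∑ i, l i) ≤ n) :
    (∑ i, (l i : ℤ) * y i = 0) ↔ (∀ j : Fin k, ∑ i, (l i : ℤ) * v i j = 0) := by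
  have hswap : ∑ i, (l i : ℤ) * y i = ∑ j : Fin k, N j * ∑ i, (l i : ℤ) * v i j := by
    simp only [hy, Finset.mul_sum]
    rw [Finset.sum_comm]
    congr 1; ext j; congr 1; ext i; ring
  have hNpos : ∀ j, 0 < N j := by
    intro j
    induction j using Nat.strong_induction_on with
    | _ j ih =>
      match j with
      | 0 => rw [hN0]; norm_num
      | m + 1 =>
        have h := hNgrow m
        have hsum : (0:ℤ) ≤ ∑ i ∈ Finset.range (m + 1), N i :=
          Finset.sum_nonneg fun i hi => (ih i (Finset.mem_range.mp hi)).le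
        have : (0:ℤ) ≤ 2 * n * B * ∑ i ∈ Finset.range (m + 1), N i :=
          mul_nonneg (by positivity) hsum
        linarith
  -- coefficients
  set c : ℕ → ℤ := fun j => if h : j < k then ∑ i, (l i : ℤ) * v i ⟨j, h⟩ else 0 with hc
  have hcbound : ∀ j, |c j| ≤ (n : ℤ) * B := by
    intro j
    rw [hc]
    by_cases h : j < k
    · simp only [h, dif_pos]
      calc |∑ i, (l i : ℤ) * v i ⟨j, h⟩| ≤ ∑ i, |(l i : ℤ) * v i ⟨j, h⟩| :=
            Finset.abs_sum_le_sum_abs _ _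
        _ ≤ ∑ i : Fin n, (l i : ℤ) * B := by
            apply Finset.sum_le_sum
            intro i _
            rw [abs_mul, abs_of_nonneg (by positivity : (0:ℤ) ≤ (l i : ℤ))]
            exact mul_le_mul_of_nonneg_left (hB i _) (by positivity)
        _ = (∑ i, (l i : ℤ)) * B := by rw [Finset.sum_mul]
        _ ≤ (n : ℤ) * B := by
            apply mul_le_mul_of_nonneg_right _ (by positivity)
            exact_mod_cast Nat.cast_le.mpr hl
    · simp only [h, dif_neg, not_false_iff, abs_zero]
      positivity
  have hbound : ∀ m, (n : ℤ) * B * ∑ i ∈ Finset.range m, N i < N m := by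
    intro m
    match m with
    | 0 => simp [hN0]
    | m + 1 =>
      have h := hNgrow m
      have hsum : (0:ℤ) ≤ ∑ i ∈ Finset.range (m + 1), N i :=
        Finset.sum_nonneg fun i _ => (hNpos i).le
      nlinarith [hsum, mul_nonneg (mul_nonneg (Nat.cast_nonneg (α := ℤ) n) (Nat.cast_nonneg (α := ℤ) B)) hsum]
  have hsum_eq : ∑ j : Fin k, N j * ∑ i, (l i : ℤ) * v i j = ∑ j ∈ Finset.range k, N j * c j := by
    rw [Finset.sum_range fun j => N j * c j]
    apply Finset.sum_congr rfl
    intro j _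
    rw [hc]
    simp [j.isLt]
  constructor
  · intro h0 j
    have : ∑ j ∈ Finset.range k, N j * c j = 0 := by
      rw [← hsum_eq, ← hswap]; exact h0
    have := no_carry_aux N c ((n : ℤ) * B) hcbound hNpos hbound k this j.val j.isLt
    rw [hc] at this
    simpa [j.isLt] using this
  · intro h
    rw [hswap]
    simp [h]
end

section
/- Let D(x) be the set of nonzero integral flows with connected support in a cone V(x) of flows, and P(x) = conv(D(x) + V(x)). If v = d + e with d ∈ D(x), e ∈ V(x), and v is an extremal point of P(x), then e = 0; hence every extremal point of P(x) is a disc-vector. -/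
/-- A flow on the complete digraph on `n` vertices. -/
def IsFlow {n : ℕ} (f : Fin n → Fin n → ℝ) : Prop :=
  (∀ i j, 0 ≤ f i j) ∧ ∀ i, (∑ j, f j i) = ∑ j, f i j

/-- Outflow at a vertex. -/
def outflow {n : ℕ} (f : Fin n → Fin n → ℝ) (i : Fin n) : ℝ := ∑ j, f i j

/-- The cone `V(x)`. -/
def Vx {n k : ℕ} (x : Fin k → Fin n → ℤ) : Set (Fin n → Fin n → ℝ) :=
  {f | IsFlow f ∧ ∀ i, (∑ j, (x i j : ℝ) * outflow f j) = 0}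

/-- A vertex is incident to the support of `f`. -/
def Incident {n : ℕ} (f : Fin n → Fin n → ℝ) (a : Fin n) : Prop :=
  ∃ c, 0 < f a c ∨ 0 < f c a

/-- The support of `f` is (strongly) connected. -/
def ConnectedSupport {n : ℕ} (f : Fin n → Fin n → ℝ) : Prop :=
  ∀ a b, Incident f a → Incident f b →
    Relation.ReflTransGen (fun u v => 0 < f u v) a b

/-- The set `D(x)` of disc-vectors: nonzero integral elements of `V(x)` with connected
support. -/
def Dx {n k : ℕ} (x : Fin k → Fin n → ℤ) : Set (Fin n → Fin n → ℝ) :=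
  {f | f ∈ Vx x ∧ f ≠ 0 ∧ (∀ i j, ∃ z : ℤ, f i j = z) ∧ ConnectedSupport f}

open Finset

lemma outflow_smul {n : ℕ} (c : ℝ) (f : Fin n → Fin n → ℝ) (i : Fin n) :
    outflow (c • f) i = c * outflow f i := by
  simp only [outflow, Pi.smul_apply, smul_eq_mul, mul_sum]

lemma IsFlow.smul {n : ℕ} {c : ℝ} {f : Fin n → Fin n → ℝ} (hc : 0 ≤ c) (hf : IsFlow f) :
    IsFlow (c • f) :=
  ⟨fun i j => mul_nonneg hc (hf.1 i j), fun i => by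
    simp only [Pi.smul_apply, smul_eq_mul, ← mul_sum, hf.2 i]⟩

lemma smul_mem_Vx {n k : ℕ} {x : Fin k → Fin n → ℤ} {c : ℝ} {f : Fin n → Fin n → ℝ}
    (hc : 0 ≤ c) (hf : f ∈ Vx x) : c • f ∈ Vx x :=
  ⟨hf.1.smul hc, fun i => by
    simp only [outflow_smul, mul_left_comm _ c, ← mul_sum, hf.2 i, mul_zero]⟩

lemma eq_zero_of_add_mem_extremePoints {E : Type*} [AddCommGroup E] [Module ℝ E] {A : Set E}
    {d e : E} (hd : d ∈ A) (hd2e : d + (2 : ℝ) • e ∈ A) (hext : d + e ∈ A.extremePoints ℝ) :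
    e = 0 := by
  have hmid : d + e ∈ openSegment ℝ d (d + (2 : ℝ) • e) :=
    ⟨1 / 2, 1 / 2, by norm_num, by norm_num, by norm_num, by module⟩
  simpa using (hext.2 hd hd2e hmid).symm

/-- if `v = d + e` with `d ∈ D(x)`, `e ∈ V(x)` is an extremal point of
`P(x) = conv(D(x) + V(x))`, then `e = 0`; hence every extremal point of `P(x)` arising
this way is a disc-vector. -/
theorem extreme_point_is_disc_vector (n k : ℕ) (x : Fin k → Fin n → ℤ)
    (v d e : Fin n → Fin n → ℝ) (hd : d ∈ Dx x) (he : e ∈ Vx x) (hv : v = d + e)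
    (hext : v ∈ Set.extremePoints ℝ
      (convexHull ℝ {g | ∃ a ∈ Dx x, ∃ b ∈ Vx x, g = a + b})) :
    e = 0 ∧ v ∈ Dx x := by
  subst hv
  have hd_mem : d ∈ {g | ∃ a ∈ Dx x, ∃ b ∈ Vx x, g = a + b} :=
    ⟨d, hd, 0, zero_smul ℝ e ▸ smul_mem_Vx le_rfl he, (add_zero d).symm⟩
  have hd2e_mem : d + (2 : ℝ) • e ∈ {g | ∃ a ∈ Dx x, ∃ b ∈ Vx x, g = a + b} :=
    ⟨d, hd, _, smul_mem_Vx zero_le_two he, rfl⟩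
  have he0 : e = 0 := eq_zero_of_add_mem_extremePoints
    (subset_convexHull ℝ _ hd_mem) (subset_convexHull ℝ _ hd2e_mem) hext
  exact ⟨he0, by rwa [he0, add_zero]⟩
end
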